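/- arXiv:math/0511283 — 6 statements merged into one kernel-verified Lean document; each statement's English description precedes it below -/
import Mathlib

section
/- Let $A$ be a (not necessarily commutative) ring, let $m \geq 2$, and let $h_{st} \in A$ for $1 \leq s < t \leq m$ be elements satisfying $h_{rs} h_{s,s+1} = h_{r,s+1}$ for all $1 \leq r < s < m$ (and for $r \leq 2$ in particular). Then $\sum_{(k_1,\dots,k_r) \in I_{1m}} (-1)^r (1 - h_{k_{r-1} k_r}) = \sum_{(k_1,\dots,k_r) \in I_{1m}} (-1)^r (1 - h_{k_1, k_1+1})(1 - h_{k_2, k_2+1}) \cdots (1 - h_{k_{r-1}, k_{r-1}+1})$, where $I_{1m}$ is the set of chains $1 = k_1 < k_2 < \cdots < k_r = m$ with $r \geq 2$. -/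
/-- A chain `(k_1, …, k_r) ∈ I_{1m}` (that is, `r ≥ 2` and `1 = k_1 < ⋯ < k_r = m`)
is encoded by the finite set `S ⊆ (1, m)` of its interior entries; its length is
`r = S.card + 2`, the entries `k_1, …, k_{r-1}` form the list `1 :: S.sort (· ≤ ·)`,
and the penultimate entry `k_{r-1}` is the last element of that list. -/
def chainList (i j : ℕ) (S : Finset ℕ) : List ℕ := i :: (S.sort (· ≤ ·) ++ [j])

/-!
Both sides are the case `m` of a signed sum `C(m) = ∑_S (-1)^(|S|+2) F_m(S)` over the interior
sets `S ⊆ (1, m)` of chains. Splitting off whether `n ∈ S` shows that each side satisfies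
`C(n+1) = C(n) · h_{n,n+1}`: for the product side because the chain `S ∪ {n}` contributes one
extra factor `1 - h_{n,n+1}`, and for the other side because
`(1 - h_{l,n+1}) - (1 - h_{n,n+1}) = (1 - h_{l,n}) h_{n,n+1}` by the multiplicativity of `h`.
At `m = 2` both sides equal `1 - h_{12}`.
-/

open Finset

theorem Finset.sort_insert_of_forall_lt {S : Finset ℕ} {n : ℕ} (hS : ∀ b ∈ S, b < n) :
    (insert n S).sort (· ≤ ·) = S.sort (· ≤ ·) ++ [n] := by
  have hnodup : (S.sort (· ≤ ·) ++ [n]).Nodup := by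
    simpa [List.nodup_append] using fun h => (hS n h).false
  have hset : (S.sort (· ≤ ·) ++ [n]).toFinset = insert n S := by
    ext; simp
  rw [← hset, List.toFinset_sort _ hnodup, List.pairwise_append]
  refine ⟨pairwise_sort _ _, List.pairwise_singleton _ _, ?_⟩
  simpa using fun b hb => (hS b hb).le

section ChainSum

variable {A : Type*} [Ring A]

def chainSum (F : Finset ℕ → A) (m : ℕ) : A :=
  ∑ S ∈ (Ioo 1 m).powerset, (-1 : ℤ) ^ (S.card + 2) • F S

theorem chainSum_succ {F G : Finset ℕ → A} {n : ℕ} (hn : 2 ≤ n) (c : A)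
    (hFG : ∀ S ⊆ Ioo 1 n, F S - F (insert n S) = G S * c) :
    chainSum F (n + 1) = chainSum G n * c := by
  have hIoo : Ioo 1 (n + 1) = insert n (Ioo 1 n) := by
    ext; simp only [mem_Ioo, mem_insert]; omega
  have hn' : n ∉ Ioo 1 n := by simp
  rw [chainSum, hIoo, sum_powerset_insert hn', ← sum_add_distrib, chainSum, sum_mul]
  refine sum_congr rfl fun S hS => ?_
  rw [mem_powerset] at hS
  have hsign : (-1 : ℤ) ^ ((insert n S).card + 2) = -(-1) ^ (S.card + 2) := by
    rw [card_insert_of_notMem fun h => hn' (hS h)]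
    ring
  rw [hsign, neg_smul, ← sub_eq_add_neg, ← smul_sub, hFG S hS, smul_mul_assoc]

def lastFactor (h : ℕ → ℕ → A) (m : ℕ) (S : Finset ℕ) : A :=
  1 - h ((1 :: S.sort (· ≤ ·)).getLast (by simp)) m

def stepProduct (h : ℕ → ℕ → A) (S : Finset ℕ) : A :=
  ((1 :: S.sort (· ≤ ·)).map fun t => 1 - h t (t + 1)).prod

theorem chainSum_lastFactor_succ (h : ℕ → ℕ → A) {n : ℕ} (hn : 2 ≤ n)
    (hyp : ∀ r, 1 ≤ r → r < n → h r n * h n (n + 1) = h r (n + 1)) :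
    chainSum (lastFactor h (n + 1)) (n + 1) = chainSum (lastFactor h n) n * h n (n + 1) := by
  refine chainSum_succ hn _ fun S hS => ?_
  have hlt : ∀ b ∈ S, b < n := fun b hb => (mem_Ioo.1 (hS hb)).2
  set l := (1 :: S.sort (· ≤ ·)).getLast (by simp)
  have hl : 1 ≤ l ∧ l < n := by
    rcases List.mem_cons.1 (List.getLast_mem (l := 1 :: S.sort (· ≤ ·)) (by simp)) with hl1 | hmem
    · omega
    · have := mem_Ioo.1 (hS ((mem_sort _).1 hmem))
      omega
  have hlast : (1 :: (insert n S).sort (· ≤ ·)).getLast (by simp) = n := by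
    simp [sort_insert_of_forall_lt hlt]
  rw [lastFactor, lastFactor, lastFactor, hlast, ← hyp l hl.1 hl.2]
  noncomm_ring

theorem chainSum_stepProduct_succ (h : ℕ → ℕ → A) {n : ℕ} (hn : 2 ≤ n) :
    chainSum (stepProduct h) (n + 1) = chainSum (stepProduct h) n * h n (n + 1) := by
  refine chainSum_succ hn _ fun S hS => ?_
  have hlt : ∀ b ∈ S, b < n := fun b hb => (mem_Ioo.1 (hS hb)).2
  rw [stepProduct, stepProduct, sort_insert_of_forall_lt hlt, ← List.cons_append, List.map_append,
    List.prod_append, List.map_singleton, List.prod_singleton, mul_sub, mul_one, sub_sub_cancel]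

end ChainSum

/-- Let `A` be a ring, `m ≥ 2`, and `h_{st} ∈ A` (`1 ≤ s < t ≤ m`)
with `h_{rs} h_{s,s+1} = h_{r,s+1}` for all `1 ≤ r < s < m`.  Then
`∑_{(k_1,…,k_r) ∈ I_{1m}} (-1)^r (1 - h_{k_{r-1} k_r})
  = ∑_{(k_1,…,k_r) ∈ I_{1m}} (-1)^r (1 - h_{k_1,k_1+1}) ⋯ (1 - h_{k_{r-1},k_{r-1}+1})`. -/
theorem stmt_2 {A : Type*} [Ring A] (m : ℕ) (hm : 2 ≤ m) (h : ℕ → ℕ → A)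
    (hyp : ∀ r s, 1 ≤ r → r < s → s < m → h r s * h s (s + 1) = h r (s + 1)) :
    ∑ S ∈ (Finset.Ioo 1 m).powerset,
        (-1 : ℤ) ^ (S.card + 2) • (1 - h ((1 :: S.sort (· ≤ ·)).getLast (by simp)) m)
      =
    ∑ S ∈ (Finset.Ioo 1 m).powerset,
        (-1 : ℤ) ^ (S.card + 2) •
          ((1 :: S.sort (· ≤ ·)).map fun t => 1 - h t (t + 1)).prod := by
  show chainSum (lastFactor h m) m = chainSum (stepProduct h) m
  induction m, hm using Nat.le_induction with
  | base => simp [chainSum, lastFactor, stepProduct, show Ioo 1 2 = ∅ from rfl]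
  | succ n hn ih =>
    rw [chainSum_lastFactor_succ h hn fun r hr hrn => hyp r n hr hrn n.lt_succ_self,
      chainSum_stepProduct_succ h hn,
      ih fun r s hr hrs hsn => hyp r s hr hrs (hsn.trans n.lt_succ_self)]
end

section
/- Let $A$ be a ring offering elements $h_{st}$ for $1 \leq s < t \leq m$ ($m > 2$) with $h_{rs} h_{s,s+1} = h_{r,s+1}$ for all $r < s < m$. Define $S_m = \sum_{(k_1,\dots,k_r) \in I_{1m}} (-1)^r (1 - h_{k_1,k_1+1}) \cdots (1 - h_{k_{r-1},k_{r-1}+1})$. Then $S_m = h_{2m} - h_{1m}$. -/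
open Finset

theorem Finset.sum_powerset_neg_one_pow_smul_prod_sort {α A : Type*} [LinearOrder α] [Ring A]
    (f : α → A) (s : Finset α) :
    ∑ S ∈ s.powerset, (-1 : ℤ) ^ #S • (S.sort.map f).prod =
      (s.sort.map fun a => 1 - f a).prod := by
  induction s using Finset.induction_on_min with
  | empty => simp
  | insert a s ha ih =>
    have ha' : a ∉ s := fun h => lt_irrefl a (ha a h)
    have hsort : ∀ S ⊆ s, (insert a S).sort = a :: S.sort := fun S hS =>
      sort_insert _ (fun b hb => (ha b (hS hb)).le) (fun h => ha' (hS h))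
    rw [sum_powerset_insert ha', hsort s subset_rfl, List.map_cons, List.prod_cons, ← ih,
      sub_mul, one_mul, mul_sum, sub_eq_add_neg, ← sum_neg_distrib]
    congr 1
    refine sum_congr rfl fun S hS => ?_
    have hS := mem_powerset.mp hS
    rw [hsort S hS, card_insert_of_notMem (fun h => ha' (hS h)), List.map_cons, List.prod_cons,
      pow_succ, mul_comm, mul_smul, neg_one_smul, mul_smul_comm]

theorem Nat.sort_Ico_eq_cons {a b : ℕ} (hab : a < b) :
    (Ico a b).sort = a :: (Ico (a + 1) b).sort := by
  rw [← insert_Ico_add_one_left_eq_Ico hab]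
  exact sort_insert _ (fun k hk => Nat.le_of_succ_le (mem_Ico.mp hk).1) (by simp)

theorem mul_prod_sort_Ico_eq {M : Type*} [Monoid M] (h : ℕ → ℕ → M) {r a b : ℕ} (hab : a ≤ b)
    (hyp : ∀ s, a ≤ s → s < b → h r s * h s (s + 1) = h r (s + 1)) :
    h r a * ((Ico a b).sort.map fun k => h k (k + 1)).prod = h r b := by
  induction hab using Nat.decreasingInduction with
  | self => simp
  | of_succ a hab ih =>
    rw [Nat.sort_Ico_eq_cons hab, List.map_cons, List.prod_cons, ← mul_assoc, hyp a le_rfl hab]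
    exact ih fun s hs hsb => hyp s (by omega) hsb

/-- Let `A` be a ring, `m > 2`, and `h_{st} ∈ A` (`1 ≤ s < t ≤ m`)
with `h_{rs} h_{s,s+1} = h_{r,s+1}` for all `r < s < m`.  Then
`S_m = ∑_{(k_1,…,k_r) ∈ I_{1m}} (-1)^r (1 - h_{k_1,k_1+1}) ⋯ (1 - h_{k_{r-1},k_{r-1}+1})
     = h_{2m} - h_{1m}`. -/
theorem stmt_3 {A : Type*} [Ring A] (m : ℕ) (hm : 2 < m) (h : ℕ → ℕ → A)
    (hyp : ∀ r s, 1 ≤ r → r < s → s < m → h r s * h s (s + 1) = h r (s + 1)) :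
    ∑ S ∈ (Finset.Ioo 1 m).powerset,
        (-1 : ℤ) ^ (S.card + 2) •
          ((1 :: S.sort (· ≤ ·)).map fun t => 1 - h t (t + 1)).prod
      = h 2 m - h 1 m := by
  have hchain (S : Finset ℕ) :
      (-1 : ℤ) ^ (#S + 2) • ((1 :: S.sort).map fun t => 1 - h t (t + 1)).prod =
        (1 - h 1 2) * ((-1 : ℤ) ^ #S • (S.sort.map fun t => 1 - h t (t + 1)).prod) := by
    rw [pow_add, neg_one_sq, mul_one, List.map_cons, List.prod_cons, mul_smul_comm]
  have h1m : h 1 2 * _ = h 1 m :=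
    mul_prod_sort_Ico_eq h hm.le fun s _ hsm => hyp 1 s le_rfl (by omega) hsm
  have h2m : h 2 3 * _ = h 2 m :=
    mul_prod_sort_Ico_eq h hm fun s hs hsm => hyp 2 s (by omega) (by omega) hsm
  rw [sum_congr rfl fun S _ => hchain S, ← mul_sum, sum_powerset_neg_one_pow_smul_prod_sort,
    show Ioo 1 m = Ico 2 m from (Ico_add_one_left_eq_Ioo 1 m).symm]
  simp only [sub_sub_cancel]
  rw [sub_mul, one_mul, h1m, Nat.sort_Ico_eq_cons hm, List.map_cons, List.prod_cons, h2m]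
end

section
/- Let $A$ be an algebra over a commutative ring $k$, and let $x_1, \dots, x_m \in A$ be elements such that $x_l x_k = p_{lk} x_k x_l$ for all $k < l$, where $p_{lk} \in k$. Then for every natural number $N$, $(x_1 x_2 \cdots x_m)^N = \big(\prod_{k < l} p_{lk}^{N(N-1)/2}\big)\, x_1^N x_2^N \cdots x_m^N$. -/
/-!
If `v u = q u v`, moving each `v` of `(uv)^N` to the right past the `u`s costs one factor `q`
per pair, so `(uv)^N = q^(N choose 2) u^N v^N`. Since `x_{m+1}` skew-commutes past
`x_1 ⋯ x_m` with factor `∏_{a ≤ m} p_{m+1,a}`, this two-element identity with `u = x_1 ⋯ x_m`,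
`v = x_{m+1}` is the induction step on `m`.
-/

section QuasiCommuting

variable {k A : Type*} [CommSemiring k] [Semiring A] [Algebra k A]

theorem pow_mul_eq_smul_mul_pow_of_mul_eq_smul {u v : A} {q : k} (h : v * u = q • (u * v))
    (N : ℕ) : v ^ N * u = q ^ N • (u * v ^ N) := by
  induction N with
  | zero => simp
  | succ n ih =>
    calc v ^ (n + 1) * u = q • (v ^ n * u * v) := by
          rw [pow_succ, mul_assoc, h, mul_smul_comm, mul_assoc]
      _ = q ^ (n + 1) • (u * v ^ (n + 1)) := by
          rw [ih, smul_mul_assoc, smul_smul, mul_assoc, ← pow_succ, ← pow_succ']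

theorem mul_pow_eq_smul_of_mul_eq_smul {u v : A} {q : k} (h : v * u = q • (u * v)) (N : ℕ) :
    (u * v) ^ N = q ^ N.choose 2 • (u ^ N * v ^ N) := by
  induction N with
  | zero => simp
  | succ n ih =>
    calc (u * v) ^ (n + 1) = q ^ n.choose 2 • (u ^ n * (v ^ n * u) * v) := by
          rw [pow_succ, ih, smul_mul_assoc]; simp only [mul_assoc]
      _ = q ^ (n + 1).choose 2 • (u ^ (n + 1) * v ^ (n + 1)) := by
          rw [pow_mul_eq_smul_mul_pow_of_mul_eq_smul h, Nat.choose_succ_succ', Nat.choose_one_right,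
            add_comm, pow_add, mul_smul_comm, smul_mul_assoc, smul_smul, pow_succ, pow_succ]
          simp only [mul_assoc]

theorem mul_list_prod_eq_smul_of_forall_mul_eq_smul {ι : Type*} {x : ι → A} {v : A} {q : ι → k}
    {l : List ι} (h : ∀ t ∈ l, v * x t = q t • (x t * v)) :
    v * (l.map x).prod = (l.map q).prod • ((l.map x).prod * v) := by
  induction l with
  | nil => simp
  | cons a l ih =>
    simp only [List.map_cons, List.prod_cons]
    rw [← mul_assoc, h a List.mem_cons_self, smul_mul_assoc, mul_assoc,
      ih fun t ht => h t (List.mem_cons_of_mem a ht), mul_smul_comm, smul_smul, ← mul_assoc]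

end QuasiCommuting

theorem List.prod_map_range' {M : Type*} [CommMonoid M] (f : ℕ → M) (s n : ℕ) :
    ((List.range' s n).map f).prod = ∏ i ∈ Finset.Ico s (s + n), f i := by
  rw [← List.toFinset_range'_1, List.prod_toFinset _ List.nodup_range']

/-- Let `A` be an algebra over a commutative ring `k` and let
`x_1, …, x_m ∈ A` satisfy `x_l x_k = p_{lk} • (x_k x_l)` for all `k < l`, with
scalars `p_{lk} ∈ k`.  Then for every natural number `N`,
`(x_1 ⋯ x_m)^N = (∏_{k<l} p_{lk}^{N(N-1)/2}) • x_1^N ⋯ x_m^N`.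
Here `List.range' 1 m = [1, …, m]`. -/
theorem stmt_5 {k A : Type*} [CommRing k] [Ring A] [Algebra k A] (m : ℕ)
    (x : ℕ → A) (p : ℕ → ℕ → k)
    (hcomm : ∀ a b, 1 ≤ a → a < b → b ≤ m → x b * x a = p b a • (x a * x b)) (N : ℕ) :
    ((List.range' 1 m).map x).prod ^ N
      = (∏ b ∈ Finset.Icc 1 m, ∏ a ∈ Finset.Ico 1 b, p b a ^ (N * (N - 1) / 2)) •
          ((List.range' 1 m).map fun t => x t ^ N).prod := by
  rw [← Nat.choose_two_right]
  induction m with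
  | zero => simp
  | succ m ih =>
    have hlast : x (m + 1) * ((List.range' 1 m).map x).prod =
        ((List.range' 1 m).map (p (m + 1))).prod • (((List.range' 1 m).map x).prod * x (m + 1)) :=
      mul_list_prod_eq_smul_of_forall_mul_eq_smul fun t ht =>
        hcomm t (m + 1) (List.mem_range'_1.1 ht).1 (by grind) le_rfl
    rw [List.range'_1_concat, add_comm 1 m]
    simp only [List.map_append, List.prod_append, List.map_singleton, List.prod_singleton]
    rw [mul_pow_eq_smul_of_mul_eq_smul hlast, ih fun a b ha hab hb => hcomm a b ha hab (by omega),
      smul_mul_assoc, smul_smul, Finset.prod_Icc_succ_top (by omega), List.prod_map_range',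
      Finset.prod_pow, add_comm 1 m, mul_comm]
end

section
/- Let $k$ be a field, $q \in k$ a root of unity of odd order $N > 1$, and let $q_{kl} \in k^{\times}$ for $i \leq k, l \leq j-1$ satisfy $q_{kk} = q$, $q_{kl} q_{lk} = q^{-1}$ if $|k-l| = 1$, and $q_{kl} q_{lk} = 1$ if $|k - l| \geq 2$. In the algebra $R$ generated by $x_i, \dots, x_{j-1}$ with relations $x_{l+1} x_l - q_{l+1,l} x_l x_{l+1} = 0$ for all $i \leq l \leq j-2$ and $x_k x_l = q_{kl} x_l x_k$ for $|k - l| \geq 2$, the iterated braided commutator $x_{ij}$ (defined by $x_{i,i+1} = x_i$ and $x_{il} = x_i x_{i+1,l} - q_{i,i+1}\cdots q_{i,l-1}\, x_{i+1,l} x_i$) satisfies $x_{ij} = (1 - q^{-1})^{j-i-1}\, x_i x_{i+1} \cdots x_{j-1}$. -/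
/-- The root vector `x_{il}`: `x_{i,i+1} = x_i` and, for `l - i ≥ 2`,
`x_{il} = [x_i, x_{i+1,l}]_c = x_i x_{i+1,l} - (q_{i,i+1} ⋯ q_{i,l-1}) • x_{i+1,l} x_i`. -/
def rootVec {k A : Type*} [CommRing k] [Ring A] [Algebra k A]
    (x : ℕ → A) (Q : ℕ → ℕ → k) : ℕ → ℕ → A
  | i, l =>
    if l ≤ i + 1 then x i
    else x i * rootVec x Q (i + 1) l
      - (∏ p ∈ Finset.Ioo i l, Q i p) • (rootVec x Q (i + 1) l * x i)
  termination_by i l => l - i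
  decreasing_by all_goals omega

private lemma mv_aux {k A : Type*} [Field k] [Ring A] [Algebra k A]
    (Q : ℕ → ℕ → k) (x : ℕ → A) (i j : ℕ)
    (hrel1 : ∀ l, i ≤ l → l + 2 ≤ j → x (l + 1) * x l = Q (l + 1) l • (x l * x (l + 1)))
    (hrel2 : ∀ a b, i ≤ a → a ≤ j - 1 → i ≤ b → b ≤ j - 1 → (a + 2 ≤ b ∨ b + 2 ≤ a) →
      x a * x b = Q a b • (x b * x a)) :
    ∀ n m, j - m = n → i < m → m ≤ j →
      ((List.range' m (j - m)).map x).prod * x i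
        = (∏ p ∈ Finset.Ico m j, Q p i) • (x i * ((List.range' m (j - m)).map x).prod) := by
  intro n
  induction n with
  | zero =>
    intro m h1 h2 h3
    have : m = j := by omega
    subst this
    simp
  | succ n ih =>
    intro m h1 h2 h3
    have hmj : m < j := by omega
    rw [h1, List.range'_succ]
    have h2' : j - (m + 1) = n := by omega
    have key : x m * x i = Q m i • (x i * x m) := by
      rcases eq_or_lt_of_le (Nat.succ_le_of_lt h2) with h | h
      · rw [← h]
        exact hrel1 i le_rfl (by omega)
      · exact hrel2 m i (by omega) (by omega) le_rfl (by omega) (Or.inr (by omega))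
    have ihm := ih (m + 1) h2' (by omega) (by omega)
    rw [h2'] at ihm
    rw [Finset.prod_eq_prod_Ico_succ_bot hmj]
    simp only [List.map_cons, List.prod_cons]
    rw [mul_assoc, ihm, mul_smul_comm, ← mul_assoc, key, smul_mul_assoc, smul_smul,
      mul_comm (∏ p ∈ Finset.Ico (m + 1) j, Q p i) (Q m i), mul_assoc]

private lemma main_aux {k A : Type*} [Field k] [Ring A] [Algebra k A]
    (q : k) (j : ℕ) (Q : ℕ → ℕ → k) (x : ℕ → A) :
    ∀ n i, j - i = n → i < j →
    (∀ a b, i ≤ a → a ≤ j - 1 → i ≤ b → b ≤ j - 1 → (a + 1 = b ∨ b + 1 = a) →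
      Q a b * Q b a = q⁻¹) →
    (∀ a b, i ≤ a → a ≤ j - 1 → i ≤ b → b ≤ j - 1 → (a + 2 ≤ b ∨ b + 2 ≤ a) →
      Q a b * Q b a = 1) →
    (∀ l, i ≤ l → l + 2 ≤ j → x (l + 1) * x l = Q (l + 1) l • (x l * x (l + 1))) →
    (∀ a b, i ≤ a → a ≤ j - 1 → i ≤ b → b ≤ j - 1 → (a + 2 ≤ b ∨ b + 2 ≤ a) →
      x a * x b = Q a b • (x b * x a)) →
    rootVec x Q i j = (1 - q⁻¹) ^ (j - i - 1) • ((List.range' i (j - i)).map x).prod := by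
  intro n
  induction n with
  | zero => intro i h1 h2 _ _ _ _; omega
  | succ n ih =>
    intro i h1 h2 hQ1 hQ2 hrel1 hrel2
    rcases Nat.eq_or_lt_of_le h2 with h | h
    · -- j = i + 1
      rw [rootVec, if_pos (by omega)]
      have : j - i = 1 := by omega
      rw [this]
      simp [← h]
    · -- j ≥ i + 2
      have hij2 : i + 2 ≤ j := h
      have hR := ih (i + 1) (by omega) (by omega)
        (fun a b ha hb hc hd he => hQ1 a b (by omega) hb (by omega) hd he)
        (fun a b ha hb hc hd he => hQ2 a b (by omega) hb (by omega) hd he)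
        (fun l hl hl2 => hrel1 l (by omega) hl2)
        (fun a b ha hb hc hd he => hrel2 a b (by omega) hb (by omega) hd he)
      set P : A := ((List.range' (i + 1) (j - (i + 1))).map x).prod with hP
      set c : k := (1 - q⁻¹) ^ (j - (i + 1) - 1) with hc
      rw [rootVec, if_neg (by omega), hR]
      have hmv := mv_aux Q x i j hrel1 hrel2 (j - (i + 1)) (i + 1) rfl (by omega) (by omega)
      rw [← hP] at hmv
      set S : k := ∏ p ∈ Finset.Ioo i j, Q i p with hS
      set T : k := ∏ p ∈ Finset.Ico (i + 1) j, Q p i with hT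
      have hscal : S * T = q⁻¹ := by
        rw [hS, hT, ← Finset.Ico_add_one_left_eq_Ioo, ← Finset.prod_mul_distrib]
        rw [Finset.prod_eq_prod_Ico_succ_bot (show i + 1 < j by omega)]
        have h1 : ∏ p ∈ Finset.Ico (i + 2) j, (Q i p * Q p i) = 1 :=
          Finset.prod_eq_one fun p hp => by
            have := Finset.mem_Ico.mp hp
            exact hQ2 i p le_rfl (by omega) (by omega) (by omega) (Or.inl (by omega))
        rw [h1, mul_one]
        exact hQ1 i (i + 1) le_rfl (by omega) (by omega) (by omega) (Or.inl rfl)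
      rw [show j - i = (j - (i + 1)) + 1 by omega, List.range'_succ]
      simp only [List.map_cons, List.prod_cons, ← hP]
      rw [mul_smul_comm, smul_mul_assoc, hmv, smul_smul, smul_smul, ← sub_smul]
      congr 1
      rw [show j - (i + 1) + 1 - 1 = (j - (i + 1) - 1) + 1 by omega, pow_succ, ← hc]
      linear_combination (-c) * hscal

/-- Let `q` be a root of unity of odd order `N > 1` in a field `k`,
and let `(q_{kl})_{i ≤ k,l ≤ j-1}` satisfy `q_{kk} = q`, `q_{kl} q_{lk} = q⁻¹` for
`|k-l| = 1` and `q_{kl} q_{lk} = 1` for `|k-l| ≥ 2`.  In any algebra with elements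
`x_i, …, x_{j-1}` satisfying the relations of the skew polynomial ring `R_{(0)}`,
namely `x_{l+1} x_l = q_{l+1,l} x_l x_{l+1}` for consecutive indices and
`x_k x_l = q_{kl} x_l x_k` for `|k-l| ≥ 2`, the root vector satisfies
`x_{ij} = (1 - q⁻¹)^{j-i-1} x_i x_{i+1} ⋯ x_{j-1}`. -/
theorem stmt_6 {k A : Type*} [Field k] [Ring A] [Algebra k A]
    (N : ℕ) (hNodd : Odd N) (hN1 : 1 < N) (q : k) (hq : IsPrimitiveRoot q N)
    (i j : ℕ) (hij : i < j) (Q : ℕ → ℕ → k)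
    (hQdiag : ∀ l, i ≤ l → l ≤ j - 1 → Q l l = q)
    (hQ1 : ∀ a b, i ≤ a → a ≤ j - 1 → i ≤ b → b ≤ j - 1 → (a + 1 = b ∨ b + 1 = a) →
      Q a b * Q b a = q⁻¹)
    (hQ2 : ∀ a b, i ≤ a → a ≤ j - 1 → i ≤ b → b ≤ j - 1 → (a + 2 ≤ b ∨ b + 2 ≤ a) →
      Q a b * Q b a = 1)
    (x : ℕ → A)
    (hrel1 : ∀ l, i ≤ l → l + 2 ≤ j → x (l + 1) * x l = Q (l + 1) l • (x l * x (l + 1)))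
    (hrel2 : ∀ a b, i ≤ a → a ≤ j - 1 → i ≤ b → b ≤ j - 1 → (a + 2 ≤ b ∨ b + 2 ≤ a) →
      x a * x b = Q a b • (x b * x a)) :
    rootVec x Q i j = (1 - q⁻¹) ^ (j - i - 1) • ((List.range' i (j - i)).map x).prod :=
  main_aux q j Q x (j - i) i rfl hij hQ1 hQ2 hrel1 hrel2
end

section
/- With the hypotheses of the previous statement (skew polynomial ring $R_f$ with all $f(l) = 0$, i.e. relations $x_{l+1} x_l = q_{l+1,l} x_l x_{l+1}$ for consecutive indices and $x_k x_l = q_{kl} x_l x_k$ for $|k-l| \geq 2$, and $q$ of odd order $N$), the $N$-th power of the root vector satisfies $x_{ij}^N = (q-1)^{N(j-i-1)}\, \tau_{ij}^{(N-1)/2}\, x_i^N x_{i+1}^N \cdots x_{j-1}^N$, where $\tau_{ij} = \prod_{i \leq k < l < j} q_{lk}^N$. -/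
theorem Nat.choose_two_of_odd {n : ℕ} (hn : Odd n) : n.choose 2 = n * ((n - 1) / 2) := by
  rw [Nat.choose_two_right, Nat.mul_div_assoc _ (Nat.Odd.sub_odd hn odd_one).two_dvd]

theorem one_sub_inv_pow_of_pow_eq_one {K : Type*} [Field K] {q : K} {N : ℕ} (h : q ^ N = 1) :
    (1 - q⁻¹) ^ N = (q - 1) ^ N := by
  rcases eq_or_ne q 0 with rfl | hq
  · rw [zero_pow_eq_one₀.1 h, pow_zero, pow_zero]
  · rw [show 1 - q⁻¹ = q⁻¹ * (q - 1) by field_simp, mul_pow, inv_pow, h, inv_one, one_mul]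

theorem Finset.prod_Ioo_prod_Ico_comm {M : Type*} [CommMonoid M] (f : ℕ → ℕ → M) (s e : ℕ) :
    ∏ b ∈ Finset.Ioo s e, ∏ a ∈ Finset.Ico s b, f b a
      = ∏ a ∈ Finset.Ico s e, ∏ b ∈ Finset.Ioo a e, f b a :=
  Finset.prod_comm' fun b a => by simp only [Finset.mem_Ioo, Finset.mem_Ico]; omega

section SkewCommuting

variable {k A : Type*} [CommRing k] [Ring A] [Algebra k A]

theorem pow_mul_eq_smul_mul_pow_of_skew {a b : A} {c : k} (h : b * a = c • (a * b)) (n : ℕ) :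
    b ^ n * a = c ^ n • (a * b ^ n) := by
  induction n with
  | zero => simp
  | succ n ih =>
    rw [pow_succ, mul_assoc, h, mul_smul_comm, ← mul_assoc, ih, smul_mul_assoc, smul_smul,
      mul_assoc, ← pow_succ, ← pow_succ']

theorem mul_pow_of_skew {a b : A} {c : k} (h : b * a = c • (a * b)) (n : ℕ) :
    (a * b) ^ n = c ^ n.choose 2 • (a ^ n * b ^ n) := by
  induction n with
  | zero => simp
  | succ n ih =>
    rw [pow_succ, ih, smul_mul_assoc, mul_assoc, ← mul_assoc (b ^ n),
      pow_mul_eq_smul_mul_pow_of_skew h, smul_mul_assoc, mul_smul_comm, smul_smul, ← pow_add,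
      Nat.choose_succ_succ', Nat.choose_one_right, add_comm, pow_succ a, pow_succ b]
    noncomm_ring

theorem List.prod_map_mul_of_skew {ι : Type*} (l : List ι) (x : ι → A) (c : ι → k) {y : A}
    (h : ∀ p ∈ l, x p * y = c p • (y * x p)) :
    (l.map x).prod * y = (l.map c).prod • (y * (l.map x).prod) := by
  induction l with
  | nil => simp
  | cons p l ih =>
    simp only [List.map_cons, List.prod_cons, List.forall_mem_cons] at h ⊢
    rw [mul_assoc, ih h.2, mul_smul_comm, ← mul_assoc, h.1, smul_mul_assoc, smul_smul,
      mul_assoc, mul_comm (c p)]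

theorem prod_range'_mul_of_skew (x : ℕ → A) (c : ℕ → k) {y : A} (s n : ℕ)
    (h : ∀ p, s ≤ p → p < s + n → x p * y = c p • (y * x p)) :
    ((List.range' s n).map x).prod * y
      = (∏ p ∈ Finset.Ico s (s + n), c p) • (y * ((List.range' s n).map x).prod) := by
  rw [List.prod_map_mul_of_skew _ x c fun p hp => h p (List.mem_range'_1.1 hp).1
    (List.mem_range'_1.1 hp).2, ← List.toFinset_range'_1, List.prod_toFinset _ List.nodup_range']

theorem prod_range'_pow_of_skew (x : ℕ → A) (Q : ℕ → ℕ → k) (N s n : ℕ)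
    (h : ∀ a b, s ≤ a → a < b → b < s + n → x b * x a = Q b a • (x a * x b)) :
    ((List.range' s n).map x).prod ^ N
      = (∏ a ∈ Finset.Ico s (s + n), ∏ b ∈ Finset.Ioo a (s + n), Q b a) ^ N.choose 2 •
          ((List.range' s n).map (x · ^ N)).prod := by
  induction n generalizing s with
  | zero => simp
  | succ n ih =>
    have hend : s + 1 + n = s + (n + 1) := by omega
    have hswap := prod_range'_mul_of_skew x (Q · s) (y := x s) (s + 1) n
      fun p hp₁ hp₂ => h s p le_rfl hp₁ (by omega)
    rw [hend, Finset.Ico_add_one_left_eq_Ioo] at hswap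
    rw [List.range'_succ, List.map_cons, List.prod_cons, List.map_cons, List.prod_cons,
      mul_pow_of_skew hswap, ih (s + 1) fun a b ha hab hb => h a b (by omega) hab (by omega),
      mul_smul_comm, smul_smul, ← mul_pow, hend,
      Finset.prod_eq_prod_Ico_succ_bot (by omega : s < s + (n + 1))]

theorem rootVec_eq_smul_prod (x : ℕ → A) (Q : ℕ → ℕ → k) (r : k) (s e : ℕ)
    (hrel : ∀ a b, s ≤ a → a < b → b < e → x b * x a = Q b a • (x a * x b))
    (hQsucc : ∀ a, s ≤ a → a + 1 < e → Q a (a + 1) * Q (a + 1) a = r)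
    (hQfar : ∀ a b, s ≤ a → a + 1 < b → b < e → Q a b * Q b a = 1) (n : ℕ) :
    ∀ m, s ≤ m → m + n + 1 = e →
      rootVec x Q m e = (1 - r) ^ n • ((List.range' m (n + 1)).map x).prod := by
  induction n with
  | zero =>
    intro m _ he
    rw [rootVec, if_pos (by omega)]
    simp
  | succ n ih =>
    intro m hm he
    have hswap := prod_range'_mul_of_skew x (Q · m) (y := x m) (m + 1) (n + 1)
      fun p hp₁ hp₂ => hrel m p hm hp₁ (by omega)
    rw [show m + 1 + (n + 1) = e by omega, Finset.Ico_add_one_left_eq_Ioo] at hswap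
    have hcoeff : (∏ p ∈ Finset.Ioo m e, Q m p) * ∏ p ∈ Finset.Ioo m e, Q p m = r := by
      rw [← Finset.prod_mul_distrib, ← Finset.Ico_add_one_left_eq_Ioo,
        ← Finset.Ioo_insert_left (by omega : m + 1 < e), Finset.prod_insert (by simp),
        hQsucc m hm (by omega), Finset.prod_eq_one fun p hp => ?_, mul_one]
      rw [Finset.mem_Ioo] at hp
      exact hQfar m p hm (by omega) hp.2
    rw [rootVec, if_neg (by omega), ih (m + 1) (by omega) (by omega), smul_mul_assoc, hswap,
      mul_smul_comm, smul_smul, smul_smul, ← sub_smul, List.range'_succ (s := m),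
      List.map_cons, List.prod_cons]
    congr 1
    linear_combination (-(1 - r) ^ n) * hcoeff

end SkewCommuting

theorem stmt_7_general {k A : Type*} [Field k] [Ring A] [Algebra k A]
    (N : ℕ) (hNodd : Odd N) (q : k) (hq : IsPrimitiveRoot q N)
    (i j : ℕ) (hij : i < j) (Q : ℕ → ℕ → k)
    (hQ1 : ∀ a b, i ≤ a → a ≤ j - 1 → i ≤ b → b ≤ j - 1 → (a + 1 = b ∨ b + 1 = a) →
      Q a b * Q b a = q⁻¹)
    (hQ2 : ∀ a b, i ≤ a → a ≤ j - 1 → i ≤ b → b ≤ j - 1 → (a + 2 ≤ b ∨ b + 2 ≤ a) →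
      Q a b * Q b a = 1)
    (x : ℕ → A)
    (hrel1 : ∀ l, i ≤ l → l + 2 ≤ j → x (l + 1) * x l = Q (l + 1) l • (x l * x (l + 1)))
    (hrel2 : ∀ a b, i ≤ a → a ≤ j - 1 → i ≤ b → b ≤ j - 1 → (a + 2 ≤ b ∨ b + 2 ≤ a) →
      x a * x b = Q a b • (x b * x a)) :
    rootVec x Q i j ^ N
      = ((q - 1) ^ (N * (j - i - 1)) *
          (∏ b ∈ Finset.Ioo i j, ∏ a ∈ Finset.Ico i b, Q b a ^ N) ^ ((N - 1) / 2)) •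
        ((List.range' i (j - i)).map fun t => x t ^ N).prod := by
  have hrel : ∀ a b, i ≤ a → a < b → b < j → x b * x a = Q b a • (x a * x b) := by
    intro a b ha hab hb
    rcases (show b = a + 1 ∨ a + 2 ≤ b by omega) with rfl | hfar
    · exact hrel1 a ha hb
    · exact hrel2 b a (by omega) (by omega) ha (by omega) (Or.inr hfar)
  have hlen : i + (j - i) = j := by omega
  have hroot := rootVec_eq_smul_prod x Q q⁻¹ i j hrel
    (fun a ha hb => hQ1 a (a + 1) ha (by omega) (by omega) (by omega) (Or.inl rfl))
    (fun a b ha hab hb => hQ2 a b ha (by omega) (by omega) (by omega) (Or.inl hab))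
    (j - i - 1) i le_rfl (by omega)
  have hpow := prod_range'_pow_of_skew x Q N i (j - i)
    fun a b ha hab hb => hrel a b ha hab (by omega)
  rw [show j - i - 1 + 1 = j - i by omega] at hroot
  rw [hroot, smul_pow, hpow, smul_smul, hlen, ← pow_mul, mul_comm _ N, pow_mul,
    one_sub_inv_pow_of_pow_eq_one hq.pow_eq_one, ← pow_mul, Nat.choose_two_of_odd hNodd,
    pow_mul, ← Finset.prod_Ioo_prod_Ico_comm]
  simp only [← Finset.prod_pow, pow_mul]

/-- Under the hypotheses of Statement 6 (skew polynomial ring `R_f`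
with `f = (0)`, i.e. relations `x_{l+1} x_l = q_{l+1,l} x_l x_{l+1}` for consecutive
indices, `x_k x_l = q_{kl} x_l x_k` for `|k-l| ≥ 2`, and `q` of odd order `N > 1`),
`x_{ij}^N = (q-1)^{N(j-i-1)} τ_{ij}^{(N-1)/2} x_i^N x_{i+1}^N ⋯ x_{j-1}^N`,
where `τ_{ij} = ∏_{i ≤ k < l < j} q_{lk}^N`. -/
theorem stmt_7 {k A : Type*} [Field k] [Ring A] [Algebra k A]
    (N : ℕ) (hNodd : Odd N) (hN1 : 1 < N) (q : k) (hq : IsPrimitiveRoot q N)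
    (i j : ℕ) (hij : i < j) (Q : ℕ → ℕ → k)
    (hQdiag : ∀ l, i ≤ l → l ≤ j - 1 → Q l l = q)
    (hQ1 : ∀ a b, i ≤ a → a ≤ j - 1 → i ≤ b → b ≤ j - 1 → (a + 1 = b ∨ b + 1 = a) →
      Q a b * Q b a = q⁻¹)
    (hQ2 : ∀ a b, i ≤ a → a ≤ j - 1 → i ≤ b → b ≤ j - 1 → (a + 2 ≤ b ∨ b + 2 ≤ a) →
      Q a b * Q b a = 1)
    (x : ℕ → A)
    (hrel1 : ∀ l, i ≤ l → l + 2 ≤ j → x (l + 1) * x l = Q (l + 1) l • (x l * x (l + 1)))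
    (hrel2 : ∀ a b, i ≤ a → a ≤ j - 1 → i ≤ b → b ≤ j - 1 → (a + 2 ≤ b ∨ b + 2 ≤ a) →
      x a * x b = Q a b • (x b * x a)) :
    rootVec x Q i j ^ N
      = ((q - 1) ^ (N * (j - i - 1)) *
          (∏ b ∈ Finset.Ioo i j, ∏ a ∈ Finset.Ico i b, Q b a ^ N) ^ ((N - 1) / 2)) •
        ((List.range' i (j - i)).map fun t => x t ^ N).prod :=
  stmt_7_general N hNodd q hq i j hij Q hQ1 hQ2 x hrel1 hrel2
end

section
/- Let $\mathcal{D}$ be a Cartan datum of type $A_n$ over a finite abelian group $\Gamma$ with elements $g_i$ and characters $\chi_i$, and let $\mu = (\mu_{ij})$ be a family of root vector parameters (i.e. $\mu_{ij} = 0$ whenever $g_{ij}^N = 1$ and whenever $\chi_{ij}^N \neq 1$, where $g_{ij} = g_i \cdots g_{j-1}$, $\chi_{ij} = \chi_i \cdots \chi_{j-1}$). For a chain $(l_1,\dots,l_m) \in I_{ij}$ and any subchain indexed by $(k_1,\dots,k_r) \in I_{1m}$, one has $\mu(l_1,\dots,l_m)\, \tau_{ij} = \mu(l_1,\dots,l_m)\,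 \tau(l_{k_1}, l_{k_2}, \dots, l_{k_r})$, where $\mu(l_1,\dots,l_m) = \mu_{l_1 l_2} \cdots \mu_{l_{m-1} l_m}$, $\tau_{ab} = \prod_{a < l < b} \chi_{al}^N(g_l)$, and $\tau(a_1,\dots,a_s) = \tau_{a_1 a_2} \cdots \tau_{a_{s-1} a_s}$. -/
/-- `pairProd f [a_1, …, a_r] = f a_1 a_2 * f a_2 a_3 * ⋯ * f a_{r-1} a_r`. -/
def pairProd {M : Type*} [Monoid M] (f : ℕ → ℕ → M) : List ℕ → M
  | [] => 1
  | [_] => 1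
  | a :: b :: t => f a b * pairProd f (b :: t)

/-- `τ_{ab} = ∏_{a < l < b} χ_{al}^N(g_l)`, where `χ_{al} = χ_a χ_{a+1} ⋯ χ_{l-1}`. -/
def tauG {k : Type*} [Field k] {Γ : Type*} [CommGroup Γ]
    (g : ℕ → Γ) (χ : ℕ → Γ →* kˣ) (N a b : ℕ) : k :=
  ∏ l ∈ Finset.Ioo a b, (∏ t ∈ Finset.Ico a l, ((χ t) (g l) : k)) ^ N


/-!
If `μ(l_1,…,l_m) = 0` there is nothing to prove. Otherwise condition (R2) forces
`χ_{l_k l_{k+1}}^N = 1` for every consecutive pair of the chain, and since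
`χ_{ac} = χ_{ab} χ_{bc}` this holds for every pair `a < c` of chain entries, in particular
for consecutive entries of any subchain. Whenever `χ_{ac}^N = 1` and `a < c < b` one has
`τ_{ab} = τ_{ac} τ_{cb}`, so `τ` along the subchain telescopes to `τ_{ij}`.
-/

open Finset

theorem Finset.sort_sublist_sort_of_subset {α : Type*} [LinearOrder α] {s t : Finset α}
    (h : t ⊆ s) : List.Sublist (t.sort (· ≤ ·)) (s.sort (· ≤ ·)) :=
  List.sublist_of_subperm_of_pairwise
    ((t.sort_nodup _).subperm fun _ hx => mem_sort _ |>.2 (h (mem_sort _ |>.1 hx)))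
    (t.pairwise_sort _) (s.pairwise_sort _)

theorem chainList_sublist {i j : ℕ} {S T : Finset ℕ} (h : T ⊆ S) :
    List.Sublist (chainList i j T) (chainList i j S) :=
  ((sort_sublist_sort_of_subset h).append_right _).cons_cons _

theorem mem_chainList {i j x : ℕ} {S : Finset ℕ} :
    x ∈ chainList i j S ↔ x = i ∨ x ∈ S ∨ x = j := by
  simp [chainList, or_comm]

theorem chainList_subset_Icc {i j : ℕ} {S : Finset ℕ} (hij : i ≤ j) (hS : S ⊆ Ioo i j) :
    ∀ x ∈ chainList i j S, x ∈ Icc i j := by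
  intro x hx
  rcases mem_chainList.1 hx with rfl | hx | rfl
  · simpa using hij
  · exact Ioo_subset_Icc_self (hS hx)
  · simpa using hij

theorem pairwise_lt_chainList {i j : ℕ} {S : Finset ℕ} (hij : i < j) (hS : S ⊆ Ioo i j) :
    (chainList i j S).Pairwise (· < ·) := by
  have hS' : ∀ x ∈ S.sort (· ≤ ·), i < x ∧ x < j := fun x hx =>
    mem_Ioo.1 (hS ((mem_sort _).1 hx))
  refine List.pairwise_cons.2 ⟨?_, List.pairwise_append.2 ⟨?_, List.pairwise_singleton _ _, ?_⟩⟩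
  · simp only [List.mem_append, List.mem_singleton]
    rintro x (hx | rfl)
    exacts [(hS' x hx).1, hij]
  · exact List.sortedLT_iff_pairwise.1 (sortedLT_sort S)
  · simp only [List.mem_singleton]
    rintro x hx _ rfl
    exact (hS' x hx).2

theorem isChain_ne_zero_of_pairProd_ne_zero {M : Type*} [MonoidWithZero M] (f : ℕ → ℕ → M) :
    ∀ {l : List ℕ}, pairProd f l ≠ 0 → l.IsChain (f · · ≠ 0)
  | [], _ => .nil
  | [a], _ => .singleton a
  | _ :: b :: t, h => by
    rw [pairProd] at h
    exact List.isChain_cons_cons.2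
      ⟨left_ne_zero_of_mul h, isChain_ne_zero_of_pairProd_ne_zero f (right_ne_zero_of_mul h)⟩

def IsTrivialSegment {G : Type*} [CommMonoid G] (χ : ℕ → G) (N a b : ℕ) : Prop :=
  a < b ∧ (∏ t ∈ Ico a b, χ t) ^ N = 1

instance {G : Type*} [CommMonoid G] (χ : ℕ → G) (N : ℕ) : IsTrans ℕ (IsTrivialSegment χ N) where
  trans _ _ _ := fun ⟨hab, h₁⟩ ⟨hbc, h₂⟩ =>
    ⟨hab.trans hbc, by rw [← prod_Ico_consecutive χ hab.le hbc.le, mul_pow, h₁, h₂, one_mul]⟩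

theorem isChain_isTrivialSegment_of_pairProd_ne_zero {G M : Type*} [CommMonoid G]
    [MonoidWithZero M] (χ : ℕ → G) (N : ℕ) {μ : ℕ → ℕ → M} {l : List ℕ}
    (hl : l.IsChain (· < ·))
    (hμ : ∀ a ∈ l, ∀ b ∈ l, a < b → (∏ t ∈ Ico a b, χ t) ^ N ≠ 1 → μ a b = 0)
    (hne : pairProd μ l ≠ 0) : l.IsChain (IsTrivialSegment χ N) := by
  have hne' := List.isChain_iff_getElem.1 (isChain_ne_zero_of_pairProd_ne_zero μ hne)
  refine List.isChain_iff_getElem.2 fun n hn => ⟨List.isChain_iff_getElem.1 hl n hn, ?_⟩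
  by_contra h
  exact hne' n hn (hμ _ (List.getElem_mem _) _ (List.getElem_mem _)
    (List.isChain_iff_getElem.1 hl n hn) h)

section Tau

variable {k Γ : Type*} [Field k] [CommGroup Γ] (g : ℕ → Γ) (χ : ℕ → Γ →* kˣ) (N : ℕ)

theorem prod_apply_pow_eq_one {s : Finset ℕ} (h : (∏ t ∈ s, χ t) ^ N = 1) (γ : Γ) :
    (∏ t ∈ s, ((χ t) γ : k)) ^ N = 1 := by
  simpa [MonoidHom.finsetProd_apply] using congrArg (fun f : Γ →* kˣ => ((f γ : kˣ) : k)) h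

theorem tauG_eq_mul {a b c : ℕ} (hac : a < c) (hcb : c < b)
    (h : (∏ t ∈ Ico a c, χ t) ^ N = 1) :
    tauG g χ N a b = tauG g χ N a c * tauG g χ N c b := by
  -- `χ_{ac}^N = 1` kills the factor `l = c` and the `χ_{ac}` part of `χ_{al}` for `l > c`.
  have hsplit : Ioo a b = Ioo a c ∪ Ico c b := by
    ext x; simp only [mem_Ioo, mem_union, mem_Ico]; omega
  have hdisj : Disjoint (Ioo a c) (Ico c b) :=
    disjoint_left.2 fun x hx hx' => by simp only [mem_Ioo, mem_Ico] at hx hx'; omega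
  unfold tauG
  rw [hsplit, prod_union hdisj, prod_eq_prod_Ico_succ_bot hcb, prod_apply_pow_eq_one χ N h,
    one_mul, Ico_add_one_left_eq_Ioo]
  congr 1
  refine prod_congr rfl fun l hl => ?_
  rw [← prod_Ico_consecutive _ hac.le (mem_Ioo.1 hl).1.le, mul_pow, prod_apply_pow_eq_one χ N h,
    one_mul]

theorem pairProd_tauG_of_pairwise :
    ∀ {l : List ℕ} {a b : ℕ}, (a :: (l ++ [b])).Pairwise (IsTrivialSegment χ N) →
      pairProd (tauG g χ N) (a :: (l ++ [b])) = tauG g χ N a b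
  | [], _, _, _ => by simp [pairProd]
  | c :: l, a, b, h => by
    change (a :: c :: (l ++ [b])).Pairwise _ at h
    have hac : IsTrivialSegment χ N a c := List.rel_of_pairwise_cons h (by simp)
    have hcb : IsTrivialSegment χ N c b := List.rel_of_pairwise_cons h.of_cons (by simp)
    change tauG g χ N a c * pairProd (tauG g χ N) (c :: (l ++ [b])) = _
    rw [pairProd_tauG_of_pairwise h.of_cons, tauG_eq_mul g χ N hac.1 hcb.1 hac.2]

end Tau

theorem stmt_11_general {k : Type*} [Field k] {Γ : Type*} [CommGroup Γ]
    (n N : ℕ)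
    (g : ℕ → Γ) (χ : ℕ → Γ →* kˣ)
    (μ : ℕ → ℕ → k)
    (hR2 : ∀ a b, 1 ≤ a → a < b → b ≤ n + 1 →
      (∏ t ∈ Finset.Ico a b, χ t) ^ N ≠ 1 → μ a b = 0)
    (i j : ℕ) (hi : 1 ≤ i) (hij : i < j) (hj : j ≤ n + 1)
    (S : Finset ℕ) (hS : S ⊆ Finset.Ioo i j) (T : Finset ℕ) (hT : T ⊆ S) :
    pairProd μ (chainList i j S) * tauG g χ N i j
      = pairProd μ (chainList i j S) * pairProd (tauG g χ N) (chainList i j T) := by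
  by_cases hμ : pairProd μ (chainList i j S) = 0
  · rw [hμ, zero_mul, zero_mul]
  have hR2S : ∀ a ∈ chainList i j S, ∀ b ∈ chainList i j S, a < b →
      (∏ t ∈ Ico a b, χ t) ^ N ≠ 1 → μ a b = 0 := fun a ha b hb hab =>
    hR2 a b (hi.trans (mem_Icc.1 (chainList_subset_Icc hij.le hS a ha)).1) hab
      ((mem_Icc.1 (chainList_subset_Icc hij.le hS b hb)).2.trans hj)
  have hsteps := isChain_isTrivialSegment_of_pairProd_ne_zero χ N
    (pairwise_lt_chainList hij hS).isChain hR2S hμ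
  exact congrArg _ (pairProd_tauG_of_pairwise g χ N
    (hsteps.pairwise.sublist (chainList_sublist hT))).symm

/-- Let `𝒟` be a Cartan datum of type `A_n` over a finite abelian
group `Γ` and `μ` a family of root vector parameters (conditions (R1) and (R2)).
For every chain `(l_1,…,l_m) ∈ I_{ij}` and every subchain `(l_{k_1},…,l_{k_r})`,
`μ(l_1,…,l_m) τ_{ij} = μ(l_1,…,l_m) τ(l_{k_1},…,l_{k_r})`. -/
theorem stmt_11 {k : Type*} [Field k] {Γ : Type*} [CommGroup Γ] [Fintype Γ]
    (n N : ℕ) (hn : 2 ≤ n) (hNodd : Odd N) (hN1 : 1 < N)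
    (q : k) (hq : IsPrimitiveRoot q N)
    (g : ℕ → Γ) (χ : ℕ → Γ →* kˣ)
    (hdiag : ∀ l, 1 ≤ l → l ≤ n → ((χ l) (g l) : k) = q)
    (hC1 : ∀ a b, 1 ≤ a → a ≤ n → 1 ≤ b → b ≤ n → (a + 1 = b ∨ b + 1 = a) →
      ((χ b) (g a) : k) * ((χ a) (g b) : k) = q⁻¹)
    (hC2 : ∀ a b, 1 ≤ a → a ≤ n → 1 ≤ b → b ≤ n → (a + 2 ≤ b ∨ b + 2 ≤ a) →
      ((χ b) (g a) : k) * ((χ a) (g b) : k) = 1)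
    (μ : ℕ → ℕ → k)
    (hR1 : ∀ a b, 1 ≤ a → a < b → b ≤ n + 1 →
      (∏ t ∈ Finset.Ico a b, g t) ^ N = 1 → μ a b = 0)
    (hR2 : ∀ a b, 1 ≤ a → a < b → b ≤ n + 1 →
      (∏ t ∈ Finset.Ico a b, χ t) ^ N ≠ 1 → μ a b = 0)
    (i j : ℕ) (hi : 1 ≤ i) (hij : i < j) (hj : j ≤ n + 1)
    (S : Finset ℕ) (hS : S ⊆ Finset.Ioo i j) (T : Finset ℕ) (hT : T ⊆ S) :
    pairProd μ (chainList i j S) * tauG g χ N i j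
      = pairProd μ (chainList i j S) * pairProd (tauG g χ N) (chainList i j T) :=
  stmt_11_general n N g χ μ hR2 i j hi hij hj S hS T hT
end
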